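/- arXiv:2212.10850 — 2 statements merged into one kernel-verified Lean document; each statement's English description precedes it below -/
import Mathlib

section
/- For every simple connected graph G, σ(G) ≤ f_svcp(G) ≤ γ(G), where σ(G) is the covering cover pebbling number and γ(G) the cover pebbling number. -/
open Finset

/-- `S` is a vertex cover of `G`: every edge has at least one endpoint in `S`. -/
def IsVC {V : Type*} (G : SimpleGraph V) (S : Set V) : Prop :=
  ∀ ⦃u v : V⦄, G.Adj u v → u ∈ S ∨ v ∈ S

/-- `S` is a secure vertex cover of `G`. -/
def IsSecureVC {V : Type*} (G : SimpleGraph V) (S : Set V) : Prop :=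
  IsVC G S ∧ ∀ u : V, ∃ v ∈ S, G.Adj u v ∧ IsVC G ((S \ {v}) ∪ {u})

/-- One pebbling move: remove two pebbles from `u`, add one pebble on a neighbor `v`. -/
def PebbleMove {V : Type*} [DecidableEq V] (G : SimpleGraph V) (C C' : V → ℕ) : Prop :=
  ∃ u v : V, G.Adj u v ∧ 2 ≤ C u ∧
    C' = Function.update (Function.update C u (C u - 2)) v (C v + 1)

/-- A distribution `C` can reach the set `S`: some sequence of pebbling moves
places at least one pebble on every vertex of `S`. -/
def Reaches {V : Type*} [DecidableEq V] (G : SimpleGraph V) (C : V → ℕ) (S : Set V) : Prop :=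
  ∃ C' : V → ℕ, Relation.ReflTransGen (PebbleMove G) C C' ∧ ∀ v ∈ S, 1 ≤ C' v

/-- The secure vertex cover pebbling number of `G`. -/
noncomputable def fsvcp {V : Type*} [Fintype V] [DecidableEq V] (G : SimpleGraph V) : ℕ :=
  sInf {m : ℕ | ∀ C : V → ℕ, (∑ v, C v) = m →
    ∃ S : Set V, IsSecureVC G S ∧ Reaches G C S}

/-- The cover pebbling number of `G`. -/
noncomputable def coverPeb {V : Type*} [Fintype V] [DecidableEq V] (G : SimpleGraph V) : ℕ :=
  sInf {m : ℕ | ∀ C : V → ℕ, (∑ v, C v) = m → Reaches G C Set.univ}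

/-- The covering cover pebbling number of `G`. -/
noncomputable def covCoverPeb {V : Type*} [Fintype V] [DecidableEq V] (G : SimpleGraph V) : ℕ :=
  sInf {m : ℕ | ∀ C : V → ℕ, (∑ v, C v) = m →
    ∃ S : Set V, IsVC G S ∧ Reaches G C S}

/-- The secure vertex cover number of `G`. -/
noncomputable def secVCNum {V : Type*} [Fintype V] (G : SimpleGraph V) : ℕ :=
  sInf {k : ℕ | ∃ S : Set V, IsSecureVC G S ∧ S.ncard = k}

/-- The join `G + H` of two graphs. -/
def graphJoin {V W : Type*} (G : SimpleGraph V) (H : SimpleGraph W) :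
    SimpleGraph (V ⊕ W) where
  Adj x y :=
    match x, y with
    | Sum.inl a, Sum.inl b => G.Adj a b
    | Sum.inr a, Sum.inr b => H.Adj a b
    | Sum.inl _, Sum.inr _ => True
    | Sum.inr _, Sum.inl _ => True
  symm := by
    constructor
    rintro (a | a) (b | b) h
    · exact G.adj_symm h
    · trivial
    · trivial
    · exact H.adj_symm h
  loopless := by
    constructor
    rintro (a | a) h
    · exact G.irrefl h
    · exact H.irrefl h
/-- The graph `G*`: a copy of `G`, a clique on a second copy `V'` of the vertex set,
and a perfect matching joining each vertex to its copy. -/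
def Gstar {V : Type*} (G : SimpleGraph V) : SimpleGraph (V ⊕ V) where
  Adj x y :=
    match x, y with
    | Sum.inl a, Sum.inl b => G.Adj a b
    | Sum.inr a, Sum.inr b => a ≠ b
    | Sum.inl a, Sum.inr b => a = b
    | Sum.inr a, Sum.inl b => a = b
  symm := by
    constructor
    rintro (a | a) (b | b) h
    · exact G.adj_symm h
    · exact h.symm
    · exact h.symm
    · exact h.symm
  loopless := by
    constructor
    rintro (a | a) h
    · exact G.irrefl h
    · exact h rfl

/-- The friendship graph `F n`: `n` triangles sharing a common apex vertex `none`. -/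
def friendshipGraph (n : ℕ) : SimpleGraph (Option (Fin n × Fin 2)) where
  Adj x y :=
    match x, y with
    | none, none => False
    | none, some _ => True
    | some _, none => True
    | some a, some b => a.1 = b.1 ∧ a.2 ≠ b.2
  symm := by
    constructor
    rintro (_ | a) (_ | b) h
    · exact h.elim
    · trivial
    · trivial
    · exact ⟨h.1.symm, h.2.symm⟩
  loopless := by
    constructor
    rintro (_ | a) h
    · exact h
    · exact h.2 rfl

/-- The wheel graph `W n`: the join of a single vertex (the hub) with the cycle `C n`. -/
def wheelGraph (n : ℕ) : SimpleGraph (Fin 1 ⊕ Fin n) :=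
  graphJoin (⊥ : SimpleGraph (Fin 1)) (SimpleGraph.cycleGraph n)

/-- Membership predicate (in terms of the 1-based index `j`) for the canonical
secure vertex cover `S_n` of the path `P_n`: `v_{n-1}, v_{n-2}, v_{n-4} ∈ S_n`,
membership is 5-periodic (`v_k ∈ S_n ↔ v_{k+5} ∈ S_n` for `2 ≤ k ≤ n-5`), and
`v_1 ∈ S_n` iff `n ≢ 4 (mod 5)`. -/
def inSpath (n j : ℕ) : Prop :=
  (2 ≤ j ∧ j ≤ n ∧ ((n - j) % 5 = 1 ∨ (n - j) % 5 = 2 ∨ (n - j) % 5 = 4)) ∨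
    (j = 1 ∧ 2 ≤ n ∧ n % 5 ≠ 4)

instance (n j : ℕ) : Decidable (inSpath n j) := by unfold inSpath; infer_instance

/-- The canonical secure vertex cover `S_n` of the path `P_n` (vertex `v_j`
corresponds to `(j-1 : Fin n)`). -/
def SpathFinset (n : ℕ) : Finset (Fin n) :=
  Finset.univ.filter (fun i => inSpath n (i.1 + 1))

/-- The weight of a set of vertices of `P_n`: `w(S) = ∑_{v_j ∈ S} 2^(j-1)`. -/
def pathWeight {n : ℕ} (S : Finset (Fin n)) : ℕ := ∑ i ∈ S, 2 ^ (i : ℕ)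

/-- `w_n`: the minimum weight of a secure vertex cover of the path `P_n`. -/
noncomputable def wmin (n : ℕ) : ℕ :=
  sInf {m : ℕ | ∃ S : Finset (Fin n),
    IsSecureVC (SimpleGraph.pathGraph n) ↑S ∧ pathWeight S = m}

/-!
Every secure vertex cover is a vertex cover, and once every vertex has a neighbour the whole
vertex set is a secure vertex cover; so the sets of pebble counts whose infima define σ, f_svcp
and γ are nested, and the inequalities follow as soon as the set defining γ is nonempty.
For a connected graph on `n` vertices, any `n · n · 2ⁿ` pebbles put at least `n · 2ⁿ` on some
vertex `u`, and `2^ℓ` pebbles on `u` carry one pebble along a path of length `ℓ < n`. Pebbling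
moves stay legal after adding pebbles, so these transfers run side by side to cover every vertex.
A connected graph in which some vertex has no neighbour is a single vertex: it has no secure
vertex cover, so f_svcp is `sInf ∅ = 0`, and σ = 0 because `∅` covers its (absent) edges.
-/

open Relation

lemma isSecureVC_univ {V : Type*} {G : SimpleGraph V} (h : ∀ u, ∃ v, G.Adj u v) :
    IsSecureVC G Set.univ := by
  refine ⟨fun u _ _ => Or.inl trivial, fun u => ?_⟩
  obtain ⟨v, huv⟩ := h u
  refine ⟨v, trivial, huv, fun x y hxy => ?_⟩
  by_cases hx : x = v
  · exact Or.inr (Or.inl ⟨trivial, fun hy => hxy.ne (hx.trans hy.symm)⟩)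
  · exact Or.inl (Or.inl ⟨trivial, hx⟩)

section Pebbling

variable {V : Type*} [DecidableEq V] {G : SimpleGraph V}

lemma PebbleMove.add_right {C C' : V → ℕ} (h : PebbleMove G C C') (E : V → ℕ) :
    PebbleMove G (C + E) (C' + E) := by
  obtain ⟨u, v, huv, hu, rfl⟩ := h
  refine ⟨u, v, huv, le_add_right hu, funext fun w => ?_⟩
  have := huv.ne
  simp only [Pi.add_apply, Function.update_apply]
  split_ifs <;> subst_vars <;> omega

lemma PebbleMove.reflTransGen_add_right {C C' : V → ℕ}
    (h : ReflTransGen (PebbleMove G) C C') (E : V → ℕ) :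
    ReflTransGen (PebbleMove G) (C + E) (C' + E) :=
  h.lift (· + E) fun _ _ hm => hm.add_right E

lemma PebbleMove.reflTransGen_add {C₁ C₂ D₁ D₂ : V → ℕ}
    (h₁ : ReflTransGen (PebbleMove G) C₁ D₁) (h₂ : ReflTransGen (PebbleMove G) C₂ D₂) :
    ReflTransGen (PebbleMove G) (C₁ + C₂) (D₁ + D₂) :=
  (reflTransGen_add_right h₁ C₂).trans <| by
    simpa only [add_comm] using reflTransGen_add_right h₂ D₁

lemma PebbleMove.reflTransGen_sum {ι : Type*} (s : Finset ι) {C D : ι → V → ℕ}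
    (h : ∀ i ∈ s, ReflTransGen (PebbleMove G) (C i) (D i)) :
    ReflTransGen (PebbleMove G) (∑ i ∈ s, C i) (∑ i ∈ s, D i) := by
  classical
  induction s using Finset.induction_on with
  | empty => exact .refl
  | insert i s hi ih =>
    rw [sum_insert hi, sum_insert hi]
    exact reflTransGen_add (h i (mem_insert_self i s)) (ih fun j hj => h j (mem_insert_of_mem hj))

lemma PebbleMove.single {a b : V} (h : G.Adj a b) :
    PebbleMove G (Pi.single a 2) (Pi.single b 1) := by
  refine ⟨a, b, h, by simp, funext fun w => ?_⟩
  have := h.ne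
  simp only [Pi.single_apply, Function.update_apply]
  split_ifs <;> simp_all

lemma PebbleMove.reflTransGen_single_two_mul {a b : V} (h : G.Adj a b) (k : ℕ) :
    ReflTransGen (PebbleMove G) (Pi.single a (2 * k)) (Pi.single b k) := by
  induction k with
  | zero => simp only [mul_zero, Pi.single_zero]; exact .refl
  | succ k ih =>
    rw [mul_add_one, Pi.single_add, Pi.single_add]
    exact reflTransGen_add ih (.single (PebbleMove.single h))

lemma PebbleMove.reflTransGen_single_of_walk {a t : V} (p : G.Walk a t) :
    ReflTransGen (PebbleMove G) (Pi.single a (2 ^ p.length)) (Pi.single t 1) := by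
  induction p with
  | nil => exact .refl
  | cons h p ih =>
    rw [SimpleGraph.Walk.length_cons, pow_succ']
    exact (reflTransGen_single_two_mul h _).trans ih

variable [Fintype V]

lemma SimpleGraph.Connected.reaches_univ_of_card_mul_le (hG : G.Connected) {C : V → ℕ} {u : V}
    (hu : Fintype.card V * 2 ^ Fintype.card V ≤ C u) : Reaches G C Set.univ := by
  have hpath (w : V) : ∃ p : G.Walk u w, p.length < Fintype.card V :=
    ⟨(hG u w).some.toPath, (hG u w).some.toPath.2.length_lt⟩
  choose p hp using hpath
  set A : V → ℕ := ∑ w, Pi.single u (2 ^ (p w).length)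
  have hA : A ≤ C := by
    intro v
    rcases eq_or_ne v u with rfl | hvu
    · calc A v = ∑ w, 2 ^ (p w).length := by simp [A]
        _ ≤ ∑ _w : V, 2 ^ Fintype.card V :=
          sum_le_sum fun w _ => Nat.pow_le_pow_right two_pos (hp w).le
        _ ≤ C v := by simpa using hu
    · simp [A, hvu]
  have hmoves : ReflTransGen (PebbleMove G) (A + (C - A)) (1 + (C - A)) := by
    refine PebbleMove.reflTransGen_add_right ?_ _
    rw [← Finset.univ_sum_single (1 : V → ℕ)]
    exact PebbleMove.reflTransGen_sum _ fun w _ => PebbleMove.reflTransGen_single_of_walk (p w)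
  rw [add_tsub_cancel_of_le hA] at hmoves
  exact ⟨_, hmoves, fun v _ => le_add_right le_rfl⟩

lemma SimpleGraph.Connected.reaches_univ_of_sum_eq (hG : G.Connected) {C : V → ℕ}
    (hC : ∑ v, C v = Fintype.card V * (Fintype.card V * 2 ^ Fintype.card V)) :
    Reaches G C Set.univ := by
  have : Nonempty V := hG.nonempty
  obtain ⟨u, -, hu⟩ := exists_le_of_sum_le univ_nonempty
    (f := fun _ => Fintype.card V * 2 ^ Fintype.card V) (g := C) (by simp [hC])
  exact hG.reaches_univ_of_card_mul_le hu

lemma fsvcp_eq_zero_of_forall_not_adj {x : V} (hx : ∀ v, ¬G.Adj x v) : fsvcp G = 0 := by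
  refine Nat.sInf_eq_zero.2 (Or.inr (Set.eq_empty_of_forall_notMem fun m hm => ?_))
  obtain ⟨S, hS, -⟩ := hm (Pi.single x m) (by simp)
  obtain ⟨v, -, hxv, -⟩ := hS.2 x
  exact hx v hxv

lemma covCoverPeb_eq_zero_of_forall_not_adj (h : ∀ u v, ¬G.Adj u v) : covCoverPeb G = 0 :=
  Nat.sInf_eq_zero.2 <| Or.inl fun C _ =>
    ⟨∅, fun u v huv => (h u v huv).elim, C, .refl, by simp⟩

end Pebbling

theorem stmt1 {V : Type*} [Fintype V] [DecidableEq V] (G : SimpleGraph V)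
    (hG : G.Connected) :
    covCoverPeb G ≤ fsvcp G ∧ fsvcp G ≤ coverPeb G := by
  obtain ⟨x⟩ := hG.nonempty
  rcases subsingleton_or_nontrivial V with _ | _
  · have hnadj (u v : V) : ¬G.Adj u v := fun h => h.ne (Subsingleton.elim u v)
    rw [fsvcp_eq_zero_of_forall_not_adj (hnadj x), covCoverPeb_eq_zero_of_forall_not_adj hnadj]
    exact ⟨le_rfl, Nat.zero_le _⟩
  · have hsec : IsSecureVC G Set.univ := isSecureVC_univ hG.preconnected.exists_adj_of_nontrivial
    have hcover_sub_secure :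
        {m | ∀ C : V → ℕ, ∑ v, C v = m → Reaches G C Set.univ} ⊆
          {m | ∀ C : V → ℕ, ∑ v, C v = m → ∃ S, IsSecureVC G S ∧ Reaches G C S} :=
      fun m hm C hC => ⟨_, hsec, hm C hC⟩
    have hsecure_sub_vc :
        {m | ∀ C : V → ℕ, ∑ v, C v = m → ∃ S, IsSecureVC G S ∧ Reaches G C S} ⊆
          {m | ∀ C : V → ℕ, ∑ v, C v = m → ∃ S, IsVC G S ∧ Reaches G C S} :=
      fun m hm C hC => (hm C hC).imp fun S hS => ⟨hS.1.1, hS.2⟩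
    have hcover_nonempty :
        {m | ∀ C : V → ℕ, ∑ v, C v = m → Reaches G C Set.univ}.Nonempty :=
      ⟨_, fun C hC => hG.reaches_univ_of_sum_eq hC⟩
    exact ⟨csInf_le_csInf' (hcover_nonempty.mono hcover_sub_secure) hsecure_sub_vc,
      csInf_le_csInf' hcover_nonempty hcover_sub_secure⟩
end

section
/- Let P_n be the path with vertices v_1, ..., v_n, let w(S) = Σ_{v_j ∈ S} 2^{j-1} for S ⊆ V(P_n), and let S_n be the canonical secure vertex cover (defined by: v_{n-1} ∈ S_n for n ≥ 2; v_{n-2} ∈ S_n for n ≥ 3; v_{n-4} ∈ S_n for n ≥ 5; for n ≥ 6, v_k ∈ S_n iff v_{k+5} ∈ S_n for 2 ≤ k ≤ n-5, and v_1 ∈ S_n iff n ≢ 4 mod 5). Then for every n ≥ 2 and every secure vertex cover S of P_n, w(S) ≥ w(S_n), with equality if and only if S = S_n. -/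
open Finset

/-!
The weight `w` reads a set of vertices as a binary number, so comparing weights is comparing sets
colexicographically. Hence it suffices to show, scanning the path from its far end `v_n` down to
`v_1`, that a secure vertex cover `S` agreeing with `S_n` above `v_k` must contain `v_k` whenever
`S_n` does. Measured by the distance `d = n - k` to the far end, `v_k ∈ S_n` means
`d ≡ 1, 2, 4 (mod 5)`, or `k = 1` and `d ≢ 3`. For `d ≡ 1, 4` the edge `v_k v_{k+1}` must be
covered while `v_{k+1} ∉ S`. For `d ≡ 2` the vertex `v_{k+2} ∉ S` has to be defended by `v_{k+1}`
(defending it by `v_{k+3}` uncovers the edge to `v_{k+4} ∉ S`), and then the edge `v_k v_{k+1}`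
needs `v_k`. For `k = 1`, `d ≡ 0` the defender `v_2` of `v_1` would uncover the edge to `v_3 ∉ S`.
-/

namespace Finset.Colex

variable {α : Type*} [LinearOrder α] {s t : Finset α}

theorem toColex_le_toColex_of_forall_agree_above
    (h : ∀ k ∈ t, (∀ j, k < j → (j ∈ s ↔ j ∈ t)) → k ∈ s) : toColex t ≤ toColex s := by
  rw [← not_lt, lt_iff_exists_filter_lt]
  rintro ⟨k, hk, hagree⟩
  rw [mem_sdiff] at hk
  refine hk.2 (h k hk.1 fun j hkj => ?_)
  simpa [hkj] using Finset.ext_iff.mp hagree j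

end Finset.Colex

theorem pathWeight_eq_sum_map {n : ℕ} (S : Finset (Fin n)) :
    pathWeight S = ∑ i ∈ S.map Fin.valEmbedding, 2 ^ i :=
  (Finset.sum_map S Fin.valEmbedding (2 ^ ·)).symm

theorem pathWeight_injective (n : ℕ) : Function.Injective (pathWeight (n := n)) := by
  intro S T h
  simp only [pathWeight_eq_sum_map] at h
  exact Finset.map_injective _ (Finset.geomSum_injective le_rfl h)

theorem pathWeight_le_pathWeight_iff {n : ℕ} {S T : Finset (Fin n)} :
    pathWeight S ≤ pathWeight T ↔
      toColex (S.map Fin.valEmbedding) ≤ toColex (T.map Fin.valEmbedding) := by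
  simp only [pathWeight_eq_sum_map]
  exact Finset.geomSum_le_geomSum_iff_toColex_le_toColex le_rfl

theorem mem_map_SpathFinset {n j : ℕ} :
    j ∈ (SpathFinset n).map Fin.valEmbedding ↔ inSpath n (j + 1) := by
  simp only [SpathFinset, Finset.mem_map, Finset.mem_filter, Finset.mem_univ, true_and,
    Fin.valEmbedding_apply]
  constructor
  · rintro ⟨i, hi, rfl⟩
    exact hi
  · intro hj
    exact ⟨⟨j, by unfold inSpath at hj; omega⟩, hj, rfl⟩

theorem IsSecureVC.exists_adj_forall_adj_mem {V : Type*} {G : SimpleGraph V} {S : Set V}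
    (hS : IsSecureVC G S) (u : V) :
    ∃ v ∈ S, G.Adj u v ∧ ∀ w, G.Adj v w → w ≠ u → w ∈ S := by
  obtain ⟨v, hvS, huv, hswap⟩ := hS.2 u
  refine ⟨v, hvS, huv, fun w hvw hwu => ?_⟩
  rcases hswap hvw with hv | hw
  · simp only [Set.mem_union, Set.mem_sdiff, Set.mem_singleton_iff, not_true_eq_false,
      and_false, false_or] at hv
    exact absurd hv huv.ne'
  · simp only [Set.mem_union, Set.mem_sdiff, Set.mem_singleton_iff, hwu, or_false] at hw
    exact hw.1

section PathGraph

variable {n : ℕ} {S : Finset (Fin n)}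

theorem IsVC.pathGraph_mem_or_mem (hS : IsVC (SimpleGraph.pathGraph n) ↑S) {i : ℕ}
    (hi : i + 1 < n) :
    i ∈ S.map Fin.valEmbedding ∨ i + 1 ∈ S.map Fin.valEmbedding :=
  (@hS ⟨i, by omega⟩ ⟨i + 1, hi⟩ (by simp [SimpleGraph.pathGraph_adj])).imp
    (Finset.mem_map' Fin.valEmbedding).mpr (Finset.mem_map' Fin.valEmbedding).mpr

theorem IsSecureVC.pathGraph_exists_defender (hS : IsSecureVC (SimpleGraph.pathGraph n) ↑S)
    {u : ℕ} (hu : u < n) :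
    ∃ v < n, v ∈ S.map Fin.valEmbedding ∧ (v = u + 1 ∨ u = v + 1) ∧
      ∀ w < n, (w = v + 1 ∨ v = w + 1) → w ≠ u → w ∈ S.map Fin.valEmbedding := by
  obtain ⟨v, hvS, huv, hdef⟩ := hS.exists_adj_forall_adj_mem ⟨u, hu⟩
  refine ⟨v, v.isLt, (Finset.mem_map' Fin.valEmbedding).mpr hvS,
    by simp [SimpleGraph.pathGraph_adj] at huv; omega, fun w hw hvw hwu => ?_⟩
  exact (Finset.mem_map' Fin.valEmbedding).mpr
    (hdef ⟨w, hw⟩ (by simp [SimpleGraph.pathGraph_adj]; omega) (by simpa [Fin.ext_iff]))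

theorem IsSecureVC.pathGraph_mem_of_inSpath (hS : IsSecureVC (SimpleGraph.pathGraph n) ↑S)
    {k : ℕ} (hk : inSpath n (k + 1))
    (hagree : ∀ j, k < j → (j ∈ S.map Fin.valEmbedding ↔ inSpath n (j + 1))) :
    k ∈ S.map Fin.valEmbedding := by
  set s := S.map Fin.valEmbedding
  have not_mem : ∀ j, k < j → ¬ inSpath n (j + 1) → j ∉ s :=
    fun j hkj hj hjS => hj ((hagree j hkj).mp hjS)
  unfold inSpath at hk not_mem
  have hkn : k < n := by omega
  by_cases hd : (n - 1 - k) % 5 = 1 ∨ (n - 1 - k) % 5 = 4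
  · have hk1 : k + 1 < n := by omega
    exact (hS.1.pathGraph_mem_or_mem hk1).resolve_right (not_mem (k + 1) (by omega) (by omega))
  by_cases hd2 : (n - 1 - k) % 5 = 2
  · obtain ⟨v, hvn, -, hv, hdef⟩ := hS.pathGraph_exists_defender (u := k + 2) (by omega)
    rcases hv with rfl | hv
    · exact absurd (hdef (k + 4) (by omega) (by omega) (by omega))
        (not_mem (k + 4) (by omega) (by omega))
    · exact hdef k hkn (by omega) (by omega)
  · obtain ⟨v, -, -, hv, hdef⟩ := hS.pathGraph_exists_defender (u := 0) (by omega)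
    exact absurd (hdef 2 (by omega) (by omega) (by omega)) (not_mem 2 (by omega) (by omega))

end PathGraph

theorem stmt10_general (n : ℕ) (S : Finset (Fin n))
    (hS : IsSecureVC (SimpleGraph.pathGraph n) ↑S) :
    pathWeight (SpathFinset n) ≤ pathWeight S ∧
      (pathWeight S = pathWeight (SpathFinset n) ↔ S = SpathFinset n) := by
  refine ⟨pathWeight_le_pathWeight_iff.mpr ?_, (pathWeight_injective n).eq_iff⟩
  refine Finset.Colex.toColex_le_toColex_of_forall_agree_above fun k hk hagree => ?_
  rw [mem_map_SpathFinset] at hk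
  simp only [mem_map_SpathFinset] at hagree
  exact hS.pathGraph_mem_of_inSpath hk hagree

theorem stmt10 (n : ℕ) (hn : 2 ≤ n) (S : Finset (Fin n))
    (hS : IsSecureVC (SimpleGraph.pathGraph n) ↑S) :
    pathWeight (SpathFinset n) ≤ pathWeight S ∧
      (pathWeight S = pathWeight (SpathFinset n) ↔ S = SpathFinset n) :=
  stmt10_general n S hS
end
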